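/- Let A be a real d×d matrix and B a real d×n matrix such that the pair (A,B) satisfies the Kalman condition with index d* (the columns of B, AB, …, A^{d*−1}B span ℝ^d), and let F : ℝ^d → ℝ^d be smooth and globally Lipschitz. Set G(x) := Ax + F(x). Suppose there exists a sequence (y⁽ⁿ⁾)_{n∈ℕ} in ℝ^d with inf_n |y⁽ⁿ⁾| > 0 such that lim_{n→∞} |y⁽ⁿ⁾|^{k−1} ‖D^k F(y⁽ⁿ⁾)‖ = 0 for each k = 1, 2, …, d*−1. Then there exists a point x₀ ∈ ℝ^d such that the vectors (ℒ_G^k (Be_i))(x₀), for i = 1, …, n and k = 0, 1, …, d*−1, span ℝ^d; in particular, the weak Hörmander condition for the vector fields Be_1, …, Be_n and the drift G is satisfied at x₀. -/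

import Mathlib

open Filter

/-- Iterated Lie derivative of the constant vector field `b` along the vector field `G`:
`ℒ_G^0 b = b` and `(ℒ_G^{j+1} b)(x) = D(ℒ_G^j b)(x)[G(x)] − DG(x)[(ℒ_G^j b)(x)]`. -/
noncomputable def lieIter {E : Type*} [NormedAddCommGroup E] [NormedSpace ℝ E]
    (G : E → E) (b : E) : ℕ → E → E
  | 0 => fun _ => b
  | j + 1 => fun x => fderiv ℝ (lieIter G b j) x (G x) - fderiv ℝ G x (lieIter G b j x)

lemma lieIter_contDiff {E : Type*} [NormedAddCommGroup E] [NormedSpace ℝ E]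
    {G : E → E} (hG : ContDiff ℝ (⊤ : ℕ∞) G) (b : E) (k : ℕ) :
    ContDiff ℝ (⊤ : ℕ∞) (lieIter G b k) := by
  induction k with
  | zero => exact contDiff_const
  | succ k ih =>
    have h1 : ((⊤:ℕ∞) : WithTop ℕ∞) + 1 ≤ ((⊤:ℕ∞) : WithTop ℕ∞) := by
      simp
    exact ((ih.fderiv_right h1).clm_apply hG).sub ((hG.fderiv_right h1).clm_apply ih)

lemma norm_fderiv_eq {E F : Type*} [NormedAddCommGroup E] [NormedSpace ℝ E]
    [NormedAddCommGroup F] [NormedSpace ℝ F] (f : E → F) (x : E) :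
    ‖fderiv ℝ f x‖ = ‖iteratedFDeriv ℝ 1 f x‖ := by
  rw [← norm_iteratedFDeriv_fderiv, norm_iteratedFDeriv_zero]

lemma null_mul_bdd {a b : ℕ → ℝ} {M : ℝ} (ha : Tendsto a atTop (nhds 0))
    (hb : ∀ m, |b m| ≤ M) : Tendsto (fun m => a m * b m) atTop (nhds 0) := by
  have h := ha.abs.mul_const M
  rw [abs_zero, zero_mul] at h
  refine squeeze_zero_norm (fun m => ?_) h
  rw [Real.norm_eq_abs, abs_mul]
  exact mul_le_mul_of_nonneg_left (hb m) (abs_nonneg _)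

lemma bdd_of_tendsto {s : ℕ → ℝ} {a : ℝ} (h : Tendsto s atTop (nhds a)) :
    ∃ M, ∀ m, |s m| ≤ M := by
  obtain ⟨M, hM⟩ := h.abs.bddAbove_range
  exact ⟨M, fun m => hM ⟨m, rfl⟩⟩

lemma iteratedFDeriv_sub_apply' {E F : Type*} [NormedAddCommGroup E] [NormedSpace ℝ E]
    [NormedAddCommGroup F] [NormedSpace ℝ F] {i : ℕ} {f g : E → F} {x : E}
    (hf : ContDiff ℝ i f) (hg : ContDiff ℝ i g) :
    iteratedFDeriv ℝ i (fun x => f x - g x) x =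
      iteratedFDeriv ℝ i f x - iteratedFDeriv ℝ i g x := by
  have e : (fun x => f x - g x) = fun x => f x + (-g) x := by
    funext z; simp [sub_eq_add_neg]
  rw [e, iteratedFDeriv_add_apply' hf.contDiffAt (by exact hg.neg.contDiffAt), iteratedFDeriv_neg_apply,
    sub_eq_add_neg]

lemma key {E : Type*} [NormedAddCommGroup E] [NormedSpace ℝ E]
    (Amap : E →L[ℝ] E) {F : E → E} (hFs : ContDiff ℝ (⊤ : ℕ∞) F)
    {L : NNReal} (hFlip : LipschitzWith L F)
    {G : E → E} (hG : G = fun x => Amap x + F x)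
    {y : ℕ → E} {ε : ℝ} (hε : 0 < ε) (hy : ∀ m, ε ≤ ‖y m‖)
    {dstar : ℕ}
    (hdecay : ∀ k : ℕ, 1 ≤ k → k ≤ dstar - 1 →
      Tendsto (fun m => ‖y m‖ ^ (k - 1) * ‖iteratedFDeriv ℝ k F (y m)‖) atTop (nhds 0))
    (b : E) (k : ℕ) :
    (k < dstar →
      Tendsto (fun m => lieIter G b k (y m)) atTop (nhds ((-1 : ℝ) ^ k • (Amap ^ k) b))) ∧
    (∀ j, 1 ≤ j → j + k < dstar →
      Tendsto (fun m => ‖y m‖ ^ j * ‖iteratedFDeriv ℝ j (lieIter G b k) (y m)‖)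
        atTop (nhds 0)) := by
  have hGs : ContDiff ℝ (⊤ : ℕ∞) G := by
    rw [hG]; exact (Amap.contDiff).add hFs
  have hεne : ε ≠ 0 := ne_of_gt hε
  set C₀ : ℝ := ‖Amap‖ + (L : ℝ) + ‖F 0‖ / ε with hC₀
  have hg0 : ∀ m, ‖G (y m)‖ ≤ C₀ * ‖y m‖ := by
    intro m
    have h1 : ‖Amap (y m)‖ ≤ ‖Amap‖ * ‖y m‖ := Amap.le_opNorm _
    have h2 : ‖F (y m) - F 0‖ ≤ (L : ℝ) * ‖y m‖ := by
      have := hFlip.dist_le_mul (y m) 0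
      simpa [dist_eq_norm] using this
    have h3 : ‖F (y m)‖ ≤ ‖F (y m) - F 0‖ + ‖F 0‖ := by
      calc ‖F (y m)‖ = ‖(F (y m) - F 0) + F 0‖ := by rw [sub_add_cancel]
        _ ≤ ‖F (y m) - F 0‖ + ‖F 0‖ := norm_add_le _ _
    have h4 : ‖F 0‖ ≤ ‖F 0‖ / ε * ‖y m‖ := by
      rw [div_mul_eq_mul_div, le_div_iff₀ hε]
      exact mul_le_mul_of_nonneg_left (hy m) (norm_nonneg _)
    have h5 : ‖G (y m)‖ ≤ ‖Amap (y m)‖ + ‖F (y m)‖ := by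
      rw [hG]; exact norm_add_le _ _
    have h6 : ‖G (y m)‖ ≤ ‖Amap‖ * ‖y m‖ + ((L : ℝ) * ‖y m‖ + ‖F 0‖ / ε * ‖y m‖) := by
      linarith
    exact h6.trans_eq (by rw [hC₀]; ring)
  have honele : (1 : WithTop ℕ∞) ≤ ((⊤:ℕ∞) : WithTop ℕ∞) := by
    exact_mod_cast le_top
  have hfderivG : ∀ x, fderiv ℝ G x = (Amap : E →L[ℝ] E) + fderiv ℝ F x := by
    intro x
    rw [hG, fderiv_fun_add (Amap.differentiable.differentiableAt)
      ((hFs.differentiable (by simp)).differentiableAt), Amap.fderiv]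
  have hfF_le : ∀ x : E, ‖fderiv ℝ F x‖ ≤ (L : ℝ) := fun x =>
    norm_fderiv_le_of_lipschitz ℝ hFlip
  have hg1 : ∀ x, ‖iteratedFDeriv ℝ 1 G x‖ ≤ ‖Amap‖ + (L : ℝ) := by
    intro x
    rw [← norm_fderiv_eq, hfderivG]
    exact (norm_add_le _ _).trans (add_le_add le_rfl (hfF_le x))
  have hg2 : ∀ r, 2 ≤ r → ∀ x, ‖iteratedFDeriv ℝ r G x‖ = ‖iteratedFDeriv ℝ r F x‖ := by
    intro r hr x
    have hGdecomp : G = (⇑Amap : E → E) + F := by rw [hG]; rfl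
    have hAmap : ‖iteratedFDeriv ℝ r (⇑Amap) x‖ = 0 := by
      obtain ⟨s, rfl⟩ : ∃ s, r = s + 2 := ⟨r - 2, by omega⟩
      rw [show s + 2 = (s + 1) + 1 from rfl, ← norm_iteratedFDeriv_fderiv]
      have hfa : fderiv ℝ (⇑Amap) = fun _ : E => (Amap : E →L[ℝ] E) := by
        funext z; exact Amap.fderiv
      rw [hfa, iteratedFDeriv_const_of_ne (by omega)]
      simp
    rw [hGdecomp, iteratedFDeriv_add_apply (Amap.contDiff.contDiffAt) (hFs.of_le (show ((r:ℕ) : WithTop ℕ∞) ≤ ((⊤:ℕ∞) : WithTop ℕ∞) by exact_mod_cast le_top)).contDiffAt,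
      norm_eq_zero.mp hAmap, zero_add]
  have hgdecay : ∀ r, 2 ≤ r → r ≤ dstar - 1 →
      Tendsto (fun m => ‖y m‖ ^ (r - 1) * ‖iteratedFDeriv ℝ r G (y m)‖) atTop (nhds 0) := by
    intro r hr2 hrd
    refine Tendsto.congr (fun m => ?_) (hdecay r (by omega) hrd)
    rw [hg2 r hr2]
  induction k with
  | zero =>
    constructor
    · intro _
      have hb : ((-1 : ℝ) ^ 0 • ((Amap ^ 0) b)) = b := by simp
      rw [hb]
      exact tendsto_const_nhds
    · intro j hj1 _
      refine Tendsto.congr (fun m => ?_) (tendsto_const_nhds (x := (0:ℝ)))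
      rw [show lieIter G b 0 = (fun _ : E => b) from rfl,
        iteratedFDeriv_const_of_ne (by omega)]
      simp
  | succ k ih =>
    have hΛs : ContDiff ℝ (⊤:ℕ∞) (lieIter G b k) := lieIter_contDiff hGs b k
    have htop1 : ((⊤:ℕ∞) : WithTop ℕ∞) + 1 ≤ ((⊤:ℕ∞) : WithTop ℕ∞) := by simp
    have hΛ's : ContDiff ℝ (⊤:ℕ∞) (fun x => fderiv ℝ (lieIter G b k) x) :=
      hΛs.fderiv_right htop1
    have hG's : ContDiff ℝ (⊤:ℕ∞) (fun x => fderiv ℝ G x) := hGs.fderiv_right htop1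
    constructor
    · intro hk
      have hk' : k < dstar := by omega
      have lim2 := ih.1 hk'
      have hT1 : Tendsto (fun m => (fderiv ℝ (lieIter G b k) (y m)) (G (y m)))
          atTop (nhds 0) := by
        have hnull := ih.2 1 le_rfl (by omega)
        have hbb : Tendsto (fun m => C₀ * (‖y m‖ ^ 1 *
            ‖iteratedFDeriv ℝ 1 (lieIter G b k) (y m)‖)) atTop (nhds 0) := by
          simpa using hnull.const_mul C₀
        refine squeeze_zero_norm (fun m => ?_) hbb
        calc ‖(fderiv ℝ (lieIter G b k) (y m)) (G (y m))‖
            ≤ ‖fderiv ℝ (lieIter G b k) (y m)‖ * ‖G (y m)‖ :=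
              ContinuousLinearMap.le_opNorm _ _
          _ ≤ ‖iteratedFDeriv ℝ 1 (lieIter G b k) (y m)‖ * (C₀ * ‖y m‖) := by
              rw [← norm_fderiv_eq]
              exact mul_le_mul (le_rfl) (hg0 m) (norm_nonneg _) (norm_nonneg _)
          _ = C₀ * (‖y m‖ ^ 1 * ‖iteratedFDeriv ℝ 1 (lieIter G b k) (y m)‖) := by ring
      have hT2a : Tendsto (fun m => Amap (lieIter G b k (y m))) atTop
          (nhds (Amap ((-1 : ℝ) ^ k • (Amap ^ k) b))) :=
        (Amap.continuous.tendsto _).comp lim2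
      have hT2b : Tendsto (fun m => (fderiv ℝ F (y m)) (lieIter G b k (y m)))
          atTop (nhds 0) := by
        have hd1 : Tendsto (fun m => ‖iteratedFDeriv ℝ 1 F (y m)‖) atTop (nhds 0) := by
          have := hdecay 1 le_rfl (by omega)
          simpa using this
        have hmul := hd1.mul lim2.norm
        rw [zero_mul] at hmul
        refine squeeze_zero_norm (fun m => ?_) hmul
        calc ‖(fderiv ℝ F (y m)) (lieIter G b k (y m))‖
            ≤ ‖fderiv ℝ F (y m)‖ * ‖lieIter G b k (y m)‖ :=
              ContinuousLinearMap.le_opNorm _ _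
          _ = ‖iteratedFDeriv ℝ 1 F (y m)‖ * ‖lieIter G b k (y m)‖ := by
              rw [norm_fderiv_eq]
      have heq : (fun m => lieIter G b (k+1) (y m)) =
          fun m => (fderiv ℝ (lieIter G b k) (y m)) (G (y m)) -
            (Amap (lieIter G b k (y m)) + (fderiv ℝ F (y m)) (lieIter G b k (y m))) := by
        funext m
        show (fderiv ℝ (lieIter G b k) (y m)) (G (y m)) -
            (fderiv ℝ G (y m)) (lieIter G b k (y m)) = _
        rw [hfderivG]
        simp [ContinuousLinearMap.add_apply]
      rw [heq]
      have hfinal := hT1.sub (hT2a.add hT2b)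
      rw [add_zero, zero_sub] at hfinal
      have hlim : ((-1 : ℝ) ^ (k+1) • (Amap ^ (k+1)) b) =
          -(Amap ((-1 : ℝ) ^ k • (Amap ^ k) b)) := by
        rw [pow_succ (-1 : ℝ), pow_succ' Amap, ContinuousLinearMap.mul_apply, map_smul, mul_smul]
        simp
      rw [hlim]
      exact hfinal
    · intro j hj1 hjk
      have hcastj : ((j:ℕ) : WithTop ℕ∞) ≤ ((⊤:ℕ∞) : WithTop ℕ∞) := by exact_mod_cast le_top
      -- splitting bound
      have hsplit : ∀ x, ‖iteratedFDeriv ℝ j (lieIter G b (k+1)) x‖ ≤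
          ‖iteratedFDeriv ℝ j (fun z => (fderiv ℝ (lieIter G b k) z) (G z)) x‖ +
          ‖iteratedFDeriv ℝ j (fun z => (fderiv ℝ G z) (lieIter G b k z)) x‖ := by
        intro x
        have ht1 : ContDiff ℝ (j : ℕ) (fun z => (fderiv ℝ (lieIter G b k) z) (G z)) :=
          (hΛ's.clm_apply hGs).of_le (by exact_mod_cast le_top)
        have ht2 : ContDiff ℝ (j : ℕ) (fun z => (fderiv ℝ G z) (lieIter G b k z)) :=
          (hG's.clm_apply hΛs).of_le (by exact_mod_cast le_top)
        have e : lieIter G b (k+1) = fun z =>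
            (fun z => (fderiv ℝ (lieIter G b k) z) (G z)) z -
            (fun z => (fderiv ℝ G z) (lieIter G b k z)) z := rfl
        rw [e, iteratedFDeriv_sub_apply' ht1 ht2]
        exact norm_sub_le _ _
      have hb1 : ∀ m, ‖iteratedFDeriv ℝ j (fun z => (fderiv ℝ (lieIter G b k) z) (G z)) (y m)‖ ≤
          ∑ i ∈ Finset.range (j+1), ↑(j.choose i) *
            ‖iteratedFDeriv ℝ (i+1) (lieIter G b k) (y m)‖ * ‖iteratedFDeriv ℝ (j-i) G (y m)‖ := by
        intro m
        have h := norm_iteratedFDeriv_clm_apply hΛ's hGs (y m) hcastj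
        refine h.trans (le_of_eq (Finset.sum_congr rfl fun i _ => ?_))
        rw [norm_iteratedFDeriv_fderiv]
      have hb2 : ∀ m, ‖iteratedFDeriv ℝ j (fun z => (fderiv ℝ G z) (lieIter G b k z)) (y m)‖ ≤
          ∑ i ∈ Finset.range (j+1), ↑(j.choose i) *
            ‖iteratedFDeriv ℝ (i+1) G (y m)‖ * ‖iteratedFDeriv ℝ (j-i) (lieIter G b k) (y m)‖ := by
        intro m
        have h := norm_iteratedFDeriv_clm_apply hG's hΛs (y m) hcastj
        refine h.trans (le_of_eq (Finset.sum_congr rfl fun i _ => ?_))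
        rw [norm_iteratedFDeriv_fderiv]
      -- term A
      have termA : ∀ i, i ≤ j → Tendsto (fun m => ‖y m‖ ^ j * (↑(j.choose i) *
          ‖iteratedFDeriv ℝ (i+1) (lieIter G b k) (y m)‖ *
          ‖iteratedFDeriv ℝ (j-i) G (y m)‖)) atTop (nhds 0) := by
        intro i hij
        have core : Tendsto (fun m => ‖y m‖ ^ j *
            (‖iteratedFDeriv ℝ (i+1) (lieIter G b k) (y m)‖ *
             ‖iteratedFDeriv ℝ (j-i) G (y m)‖)) atTop (nhds 0) := by
          rcases eq_or_lt_of_le hij with heq | hlt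
          · subst heq
            have hnull := ih.2 (i+1) (by omega) (by omega)
            have hbb : Tendsto (fun m => C₀ * (‖y m‖ ^ (i+1) *
                ‖iteratedFDeriv ℝ (i+1) (lieIter G b k) (y m)‖)) atTop (nhds 0) := by
              simpa using hnull.const_mul C₀
            refine squeeze_zero (fun m => by positivity) (fun m => ?_) hbb
            rw [Nat.sub_self, norm_iteratedFDeriv_zero]
            calc ‖y m‖ ^ i * (‖iteratedFDeriv ℝ (i+1) (lieIter G b k) (y m)‖ * ‖G (y m)‖)
                ≤ ‖y m‖ ^ i * (‖iteratedFDeriv ℝ (i+1) (lieIter G b k) (y m)‖ * (C₀ * ‖y m‖)) := by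
                  gcongr
                  exact hg0 m
              _ = C₀ * (‖y m‖ ^ (i+1) * ‖iteratedFDeriv ℝ (i+1) (lieIter G b k) (y m)‖) := by
                  rw [pow_succ]; ring
          · have hnull := ih.2 (i+1) (by omega) (by omega)
            have hbdd : ∃ M, ∀ m, |‖y m‖ ^ (j-i-1) * ‖iteratedFDeriv ℝ (j-i) G (y m)‖| ≤ M := by
              by_cases h1 : j - i = 1
              · refine ⟨‖Amap‖ + (L : ℝ), fun m => ?_⟩
                rw [h1]
                rw [abs_of_nonneg (by positivity)]
                simpa using hg1 (y m)
              · exact bdd_of_tendsto (hgdecay (j-i) (by omega) (by omega))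
            obtain ⟨M, hM⟩ := hbdd
            refine Tendsto.congr (fun m => ?_) (null_mul_bdd hnull hM)
            have hexp : ‖y m‖ ^ (i+1) * ‖y m‖ ^ (j-i-1) = ‖y m‖ ^ j := by
              rw [← pow_add]
              congr 1
              omega
            calc (‖y m‖ ^ (i+1) * ‖iteratedFDeriv ℝ (i+1) (lieIter G b k) (y m)‖) *
                  (‖y m‖ ^ (j-i-1) * ‖iteratedFDeriv ℝ (j-i) G (y m)‖)
                = (‖y m‖ ^ (i+1) * ‖y m‖ ^ (j-i-1)) *
                  (‖iteratedFDeriv ℝ (i+1) (lieIter G b k) (y m)‖ *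
                   ‖iteratedFDeriv ℝ (j-i) G (y m)‖) := by ring
              _ = ‖y m‖ ^ j * (‖iteratedFDeriv ℝ (i+1) (lieIter G b k) (y m)‖ *
                   ‖iteratedFDeriv ℝ (j-i) G (y m)‖) := by rw [hexp]
        have hre : (fun m => ‖y m‖ ^ j * (↑(j.choose i) *
            ‖iteratedFDeriv ℝ (i+1) (lieIter G b k) (y m)‖ *
            ‖iteratedFDeriv ℝ (j-i) G (y m)‖)) = fun m => (j.choose i : ℝ) *
            (‖y m‖ ^ j * (‖iteratedFDeriv ℝ (i+1) (lieIter G b k) (y m)‖ *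
             ‖iteratedFDeriv ℝ (j-i) G (y m)‖)) := by
          funext m; ring
        rw [hre]
        simpa using core.const_mul (j.choose i : ℝ)
      -- term B
      have termB : ∀ i, i ≤ j → Tendsto (fun m => ‖y m‖ ^ j * (↑(j.choose i) *
          ‖iteratedFDeriv ℝ (i+1) G (y m)‖ *
          ‖iteratedFDeriv ℝ (j-i) (lieIter G b k) (y m)‖)) atTop (nhds 0) := by
        intro i hij
        have core : Tendsto (fun m => ‖y m‖ ^ j *
            (‖iteratedFDeriv ℝ (i+1) G (y m)‖ *
             ‖iteratedFDeriv ℝ (j-i) (lieIter G b k) (y m)‖)) atTop (nhds 0) := by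
          rcases Nat.eq_zero_or_pos i with h0 | hpos
          · subst h0
            have hnull := ih.2 j hj1 (by omega)
            have hbd : ∀ m, |‖iteratedFDeriv ℝ (0+1) G (y m)‖| ≤ ‖Amap‖ + (L:ℝ) := by
              intro m
              rw [abs_of_nonneg (norm_nonneg _)]
              simpa using hg1 (y m)
            refine Tendsto.congr (fun m => ?_) (null_mul_bdd hnull hbd)
            rw [Nat.sub_zero]
            ring
          · rcases eq_or_lt_of_le hij with heq | hlt
            · subst heq
              have hga := hgdecay (i+1) (by omega) (by omega)
              have hga' : Tendsto (fun m => ‖y m‖ ^ i *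
                  ‖iteratedFDeriv ℝ (i+1) G (y m)‖) atTop (nhds 0) := by
                refine Tendsto.congr (fun m => ?_) hga
                norm_num
              have hbd : ∃ M, ∀ m, |‖iteratedFDeriv ℝ (i-i) (lieIter G b k) (y m)‖| ≤ M := by
                have hconv := (ih.1 (by omega)).norm
                obtain ⟨M, hM⟩ := bdd_of_tendsto hconv
                refine ⟨M, fun m => ?_⟩
                rw [Nat.sub_self, norm_iteratedFDeriv_zero]
                have := hM m
                rw [abs_of_nonneg (norm_nonneg _)] at this ⊢
                exact this
              obtain ⟨M, hM⟩ := hbd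
              refine Tendsto.congr (fun m => ?_) (null_mul_bdd hga' hM)
              ring
            · have hga := hgdecay (i+1) (by omega) (by omega)
              have hga' : Tendsto (fun m => ‖y m‖ ^ i *
                  ‖iteratedFDeriv ℝ (i+1) G (y m)‖) atTop (nhds 0) := by
                refine Tendsto.congr (fun m => ?_) hga
                norm_num
              have hnull := ih.2 (j-i) (by omega) (by omega)
              have hmul := hga'.mul hnull
              rw [mul_zero] at hmul
              refine Tendsto.congr (fun m => ?_) hmul
              have hexp : ‖y m‖ ^ i * ‖y m‖ ^ (j-i) = ‖y m‖ ^ j := by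
                rw [← pow_add]
                congr 1
                omega
              calc (‖y m‖ ^ i * ‖iteratedFDeriv ℝ (i+1) G (y m)‖) *
                    (‖y m‖ ^ (j-i) * ‖iteratedFDeriv ℝ (j-i) (lieIter G b k) (y m)‖)
                  = (‖y m‖ ^ i * ‖y m‖ ^ (j-i)) * (‖iteratedFDeriv ℝ (i+1) G (y m)‖ *
                    ‖iteratedFDeriv ℝ (j-i) (lieIter G b k) (y m)‖) := by ring
                _ = ‖y m‖ ^ j * (‖iteratedFDeriv ℝ (i+1) G (y m)‖ *
                    ‖iteratedFDeriv ℝ (j-i) (lieIter G b k) (y m)‖) := by rw [hexp]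
        have hre : (fun m => ‖y m‖ ^ j * (↑(j.choose i) *
            ‖iteratedFDeriv ℝ (i+1) G (y m)‖ *
            ‖iteratedFDeriv ℝ (j-i) (lieIter G b k) (y m)‖)) = fun m => (j.choose i : ℝ) *
            (‖y m‖ ^ j * (‖iteratedFDeriv ℝ (i+1) G (y m)‖ *
             ‖iteratedFDeriv ℝ (j-i) (lieIter G b k) (y m)‖)) := by
          funext m; ring
        rw [hre]
        simpa using core.const_mul (j.choose i : ℝ)
      -- assemble
      have hgtend : Tendsto (fun m => ∑ i ∈ Finset.range (j+1),
          (‖y m‖ ^ j * (↑(j.choose i) * ‖iteratedFDeriv ℝ (i+1) (lieIter G b k) (y m)‖ *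
            ‖iteratedFDeriv ℝ (j-i) G (y m)‖) +
           ‖y m‖ ^ j * (↑(j.choose i) * ‖iteratedFDeriv ℝ (i+1) G (y m)‖ *
            ‖iteratedFDeriv ℝ (j-i) (lieIter G b k) (y m)‖))) atTop (nhds 0) := by
        have h := tendsto_finset_sum (Finset.range (j+1)) (fun i hi =>
          (termA i (Nat.lt_succ_iff.mp (Finset.mem_range.mp hi))).add
          (termB i (Nat.lt_succ_iff.mp (Finset.mem_range.mp hi))))
        simpa using h
      refine squeeze_zero (fun m => by positivity) (fun m => ?_) hgtend
      calc ‖y m‖ ^ j * ‖iteratedFDeriv ℝ j (lieIter G b (k+1)) (y m)‖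
          ≤ ‖y m‖ ^ j * ((∑ i ∈ Finset.range (j+1), ↑(j.choose i) *
              ‖iteratedFDeriv ℝ (i+1) (lieIter G b k) (y m)‖ *
              ‖iteratedFDeriv ℝ (j-i) G (y m)‖) +
            (∑ i ∈ Finset.range (j+1), ↑(j.choose i) *
              ‖iteratedFDeriv ℝ (i+1) G (y m)‖ *
              ‖iteratedFDeriv ℝ (j-i) (lieIter G b k) (y m)‖)) := by
            refine mul_le_mul_of_nonneg_left ?_ (by positivity)
            exact (hsplit (y m)).trans (add_le_add (hb1 m) (hb2 m))
        _ = ∑ i ∈ Finset.range (j+1),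
            (‖y m‖ ^ j * (↑(j.choose i) * ‖iteratedFDeriv ℝ (i+1) (lieIter G b k) (y m)‖ *
              ‖iteratedFDeriv ℝ (j-i) G (y m)‖) +
             ‖y m‖ ^ j * (↑(j.choose i) * ‖iteratedFDeriv ℝ (i+1) G (y m)‖ *
              ‖iteratedFDeriv ℝ (j-i) (lieIter G b k) (y m)‖)) := by
            rw [mul_add, Finset.mul_sum, Finset.mul_sum, ← Finset.sum_add_distrib]

lemma span_stable {ι : Type*} [Fintype ι] {E : Type*} [NormedAddCommGroup E]
    [NormedSpace ℝ E] [FiniteDimensional ℝ E]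
    (v : ι → E) (w : ℕ → ι → E)
    (hw : ∀ i, Tendsto (fun m => w m i) atTop (nhds (v i)))
    (hv : Submodule.span ℝ (Set.range v) = ⊤) :
    ∃ m, Submodule.span ℝ (Set.range (w m)) = ⊤ := by
  classical
  obtain ⟨s, hsub, hspan, hli⟩ := exists_linearIndependent ℝ (Set.range v)
  have hstop : Submodule.span ℝ s = ⊤ := hspan.trans hv
  haveI : Fintype s := ((Set.finite_range v).subset hsub).fintype
  let bB : Module.Basis s ℝ E := Module.Basis.mk hli (by rw [Subtype.range_coe, hstop])
  have hbB : ∀ x : s, bB x = (x : E) := fun x => by simp [bB]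
  choose idx hidx using fun x : s => hsub x.2
  set u : ℕ → s → E := fun m x => w m (idx x) with hu
  have hulim : ∀ x : s, Tendsto (fun m => u m x) atTop (nhds (x : E)) := fun x => by
    simpa [hu, hidx x] using hw (idx x)
  have hmat : Tendsto (fun m => bB.toMatrix (u m)) atTop
      (nhds (bB.toMatrix (fun x : s => (x : E)))) := by
    apply tendsto_pi_nhds.mpr
    intro i
    rw [tendsto_pi_nhds]
    intro j
    have : Continuous fun z : E => bB.repr z i := by
      exact (LinearMap.continuous_of_finiteDimensional
        ((Finsupp.lapply i).comp (bB.repr : E →ₗ[ℝ] (s →₀ ℝ))))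
    simpa [Module.Basis.toMatrix, Function.comp_def] using (this.tendsto _).comp (hulim j)
  have hdet : Tendsto (fun m => (bB.toMatrix (u m)).det) atTop
      (nhds ((bB.toMatrix (fun x : s => (x : E))).det)) :=
    (Continuous.matrix_det continuous_id).tendsto _ |>.comp hmat
  have hone : (bB.toMatrix (fun x : s => (x : E))).det = 1 := by
    have : (fun x : s => (x : E)) = ⇑bB := by
      funext x; exact (hbB x).symm
    rw [this, Module.Basis.toMatrix_self, Matrix.det_one]
  rw [hone] at hdet
  have hne := hdet.eventually_ne one_ne_zero
  obtain ⟨m, hm⟩ := hne.exists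
  refine ⟨m, ?_⟩
  have hbasis : LinearIndependent ℝ (u m) ∧ Submodule.span ℝ (Set.range (u m)) = ⊤ := by
    rw [Module.Basis.is_basis_iff_det bB, Module.Basis.det_apply]
    exact isUnit_iff_ne_zero.mpr hm
  rw [eq_top_iff, ← hbasis.2]
  apply Submodule.span_mono
  rintro _ ⟨x, rfl⟩
  exact ⟨idx x, rfl⟩

lemma toEuc_mul {d n : ℕ} (A : Matrix (Fin d) (Fin d) ℝ) (M : Matrix (Fin d) (Fin n) ℝ)
    (v : EuclideanSpace ℝ (Fin n)) :
    Matrix.toEuclideanLin A (Matrix.toEuclideanLin M v) =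
      Matrix.toEuclideanLin (A * M) v := by
  simp [Matrix.toEuclideanLin_apply, Matrix.mulVec_mulVec]

lemma Amap_pow {d n : ℕ} (A : Matrix (Fin d) (Fin d) ℝ) (B : Matrix (Fin d) (Fin n) ℝ)
    (k : ℕ) (u : EuclideanSpace ℝ (Fin n)) :
    ((LinearMap.toContinuousLinearMap (Matrix.toEuclideanLin A)) ^ k)
        ((Matrix.toEuclideanLin B) u) = (Matrix.toEuclideanLin (A ^ k * B)) u := by
  induction k with
  | zero =>
    rw [pow_zero, pow_zero, Matrix.one_mul]
    rfl
  | succ k ih =>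
    rw [pow_succ' (LinearMap.toContinuousLinearMap (Matrix.toEuclideanLin A)) k,
      ContinuousLinearMap.mul_apply, ih]
    have hco : (LinearMap.toContinuousLinearMap (Matrix.toEuclideanLin A))
        ((Matrix.toEuclideanLin (A ^ k * B)) u) =
        (Matrix.toEuclideanLin A) ((Matrix.toEuclideanLin (A ^ k * B)) u) := rfl
    rw [hco, toEuc_mul, ← Matrix.mul_assoc, ← pow_succ']

/-- If `(A,B)` satisfies the Kalman condition with index `d*`, `F` is smooth
and globally Lipschitz, `G x = A x + F x`, and there is a sequence `(yⁿ)` bounded away from `0`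
with `|yⁿ|^{k−1} ‖D^k F(yⁿ)‖ → 0` for `k = 1, …, d*−1`, then there exists `x₀` at which the
vectors `(ℒ_G^k (B e_i))(x₀)`, `i = 1, …, n`, `k = 0, …, d*−1`, span `ℝ^d` (the weak Hörmander
condition holds at `x₀`). -/
theorem stmt10 {d n dstar : ℕ} (hn : n ≤ d) (hdstar : dstar ≤ d)
    (A : Matrix (Fin d) (Fin d) ℝ) (B : Matrix (Fin d) (Fin n) ℝ)
    (hK : Submodule.span ℝ
        {v : EuclideanSpace ℝ (Fin d) | ∃ k < dstar, ∃ i : Fin n,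
          v = (Matrix.toEuclideanLin (A ^ k * B)) (EuclideanSpace.single i 1)} = ⊤)
    (F : EuclideanSpace ℝ (Fin d) → EuclideanSpace ℝ (Fin d))
    (hFs : ContDiff ℝ (⊤ : ℕ∞) F) (hFlip : ∃ L : NNReal, LipschitzWith L F)
    (G : EuclideanSpace ℝ (Fin d) → EuclideanSpace ℝ (Fin d))
    (hG : G = fun x => Matrix.toEuclideanLin A x + F x)
    (y : ℕ → EuclideanSpace ℝ (Fin d))
    (hy : ∃ ε > (0:ℝ), ∀ m, ε ≤ ‖y m‖)
    (hdecay : ∀ k : ℕ, 1 ≤ k → k ≤ dstar - 1 →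
      Tendsto (fun m => ‖y m‖ ^ (k - 1) * ‖iteratedFDeriv ℝ k F (y m)‖) atTop (nhds 0)) :
    ∃ x₀ : EuclideanSpace ℝ (Fin d),
      Submodule.span ℝ
        {v : EuclideanSpace ℝ (Fin d) | ∃ k < dstar, ∃ i : Fin n,
          v = lieIter G ((Matrix.toEuclideanLin B) (EuclideanSpace.single i 1)) k x₀} = ⊤ := by
  obtain ⟨L, hFlip⟩ := hFlip
  obtain ⟨ε, hε, hy'⟩ := hy
  have hGdef : G = fun x =>
      (LinearMap.toContinuousLinearMap (Matrix.toEuclideanLin A)) x + F x := hG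
  have hFs' : ContDiff ℝ (⊤ : ℕ∞) F := hFs.of_le (by simp)
  have hkey := fun (i : Fin n) (k : ℕ) =>
    key (LinearMap.toContinuousLinearMap (Matrix.toEuclideanLin A)) hFs' hFlip hGdef hε hy' hdecay
      ((Matrix.toEuclideanLin B) (EuclideanSpace.single i 1)) k
  set v : Fin dstar × Fin n → EuclideanSpace ℝ (Fin d) := fun p =>
    (-1 : ℝ) ^ (p.1 : ℕ) •
      (Matrix.toEuclideanLin (A ^ (p.1 : ℕ) * B)) (EuclideanSpace.single p.2 1) with hv
  set w : ℕ → Fin dstar × Fin n → EuclideanSpace ℝ (Fin d) := fun m p =>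
    lieIter G ((Matrix.toEuclideanLin B) (EuclideanSpace.single p.2 1)) (p.1 : ℕ) (y m) with hw
  have hlim : ∀ p, Tendsto (fun m => w m p) atTop (nhds (v p)) := by
    intro p
    have h := (hkey p.2 (p.1 : ℕ)).1 p.1.isLt
    simp only [hw, hv]
    rw [← Amap_pow A B (p.1 : ℕ) (EuclideanSpace.single p.2 1)]
    exact h
  have hspan : Submodule.span ℝ (Set.range v) = ⊤ := by
    rw [eq_top_iff, ← hK]
    apply Submodule.span_le.mpr
    rintro x ⟨k, hk, i, rfl⟩
    have hx : (Matrix.toEuclideanLin (A ^ k * B)) (EuclideanSpace.single i 1) =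
        (-1 : ℝ) ^ k • v (⟨k, hk⟩, i) := by
      rw [hv]
      simp only [smul_smul, ← pow_add]
      rw [Even.neg_one_pow ⟨k, rfl⟩, one_smul]
    rw [hx]
    exact Submodule.smul_mem _ _ (Submodule.subset_span ⟨(⟨k, hk⟩, i), rfl⟩)
  obtain ⟨m, hm⟩ := span_stable v w hlim hspan
  refine ⟨y m, ?_⟩
  rw [eq_top_iff, ← hm]
  exact Submodule.span_mono (by rintro x ⟨p, rfl⟩; exact ⟨p.1, p.1.isLt, p.2, rfl⟩)
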